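/- arXiv:2007.14458 — 8 statements merged into one kernel-verified Lean document; each statement's English description precedes it below -/
import Mathlib

section
/- Let c0 ∈ (-1,1) and c5 ∈ (0,∞) with c5 ≠ 1. Define f0 = (c5(2-c0)+c0 - √(c0²(c5-1)² + 4c5)) / (2(c5-1)) and f1 = f0 + c0. Then 0 ≤ f0 ≤ 1, 0 ≤ f1 ≤ 1, and f0·f1 / ((1-f0)(1-f1)) = c5 whenever 0 < f0 < 1 and 0 < f1 < 1. -/
/-!
`f0` is the root, chosen by the minus sign, of the quadratic
`q x = c5 (1 - x) (1 - (x + c0)) - x (x + c0)`, whose vanishing is the odds-product equation.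
Writing a quadratic as `(x - r) (a (x - r) - s)` around that root shows that `r` is the point where
`q` passes from positive to negative values. Since `q` is positive at `0` and `-c0` and negative at
`1` and `1 - c0`, the root lies in `(0, 1) ∩ (-c0, 1 - c0)`.
-/

open Real

section Quadratic

variable {K : Type*} [Field K] [NeZero (2 : K)] {a b c s r : K}

theorem quadratic_eq_mul_sub_root (ha : a ≠ 0) (hs : discrim a b c = s * s)
    (hr : r = (-b - s) / (2 * a)) (x : K) :
    a * (x * x) + b * x + c = (x - r) * (a * (x - r) - s) := by
  have h2a : 2 * a ≠ 0 := mul_ne_zero two_ne_zero ha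
  have hb : b = -(2 * a * r) - s := by rw [hr]; field_simp; ring
  have hc : c = a * (r * r) + s * r := by
    have h4a : (4 : K) * a ≠ 0 := by
      rw [show (4 : K) = 2 * 2 by norm_num, mul_assoc]; exact mul_ne_zero two_ne_zero h2a
    apply mul_left_cancel₀ h4a
    rw [discrim, hb] at hs
    linear_combination -hs
  rw [hb, hc]; ring

end Quadratic

section SignChange

variable {α : Type*} [Field α] [LinearOrder α] [IsStrictOrderedRing α]

theorem neg_and_pos_of_sign_change {a s u v : α} (hs : 0 ≤ s) (huv : u < v)
    (hu : 0 < u * (a * u - s)) (hv : v * (a * v - s) < 0) : u < 0 ∧ 0 < v := by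
  constructor
  · by_contra! h
    have hu0 : 0 < u := lt_of_le_of_ne h (by rintro rfl; simp at hu)
    have hau : s < a * u := by nlinarith
    have ha : 0 < a := by nlinarith
    nlinarith [mul_lt_mul_of_pos_left huv ha]
  · by_contra! h
    have hv0 : v < 0 := lt_of_le_of_ne h (by rintro rfl; simp at hv)
    have hav : s < a * v := by nlinarith
    have ha : a < 0 := by nlinarith
    nlinarith [mul_lt_mul_of_neg_left huv ha]

theorem root_mem_Ioo_of_sign_change {a b c s r x y : α} (ha : a ≠ 0) (hs0 : 0 ≤ s)
    (hs : discrim a b c = s * s) (hr : r = (-b - s) / (2 * a)) (hxy : x < y)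
    (hx : 0 < a * (x * x) + b * x + c) (hy : a * (y * y) + b * y + c < 0) :
    r ∈ Set.Ioo x y := by
  rw [quadratic_eq_mul_sub_root ha hs hr] at hx hy
  obtain ⟨hxr, hyr⟩ := neg_and_pos_of_sign_change hs0 (sub_lt_sub_right hxy r) hx hy
  exact ⟨sub_neg.mp hxr, sub_pos.mp hyr⟩

end SignChange

theorem odds_quadratic_eq (c0 c5 x : ℝ) :
    (c5 - 1) * (x * x) + -(c5 * (2 - c0) + c0) * x + c5 * (1 - c0) =
      c5 * ((1 - x) * (1 - (x + c0))) - x * (x + c0) := by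
  ring

theorem discrim_odds_quadratic (c0 c5 : ℝ) :
    discrim (c5 - 1) (-(c5 * (2 - c0) + c0)) (c5 * (1 - c0)) = c0 ^ 2 * (c5 - 1) ^ 2 + 4 * c5 := by
  rw [discrim]; ring

/-- Additive LATE parameterization: with risk difference `c0` and odds product `c5`,
`f0` and `f1 = f0 + c0` are probabilities and their odds product is `c5`. -/
theorem stmt_2 (c0 c5 : ℝ) (hc0 : c0 ∈ Set.Ioo (-1 : ℝ) 1) (hc5 : 0 < c5) (hne : c5 ≠ 1)
    (f0 f1 : ℝ)
    (hf0 : f0 = (c5 * (2 - c0) + c0 - Real.sqrt (c0 ^ 2 * (c5 - 1) ^ 2 + 4 * c5)) /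
      (2 * (c5 - 1)))
    (hf1 : f1 = f0 + c0) :
    0 ≤ f0 ∧ f0 ≤ 1 ∧ 0 ≤ f1 ∧ f1 ≤ 1 ∧
    (0 < f0 → f0 < 1 → 0 < f1 → f1 < 1 →
      f0 * f1 / ((1 - f0) * (1 - f1)) = c5) := by
  obtain ⟨hc0l, hc0u⟩ := hc0
  have ha : c5 - 1 ≠ 0 := sub_ne_zero.mpr hne
  have hs : discrim (c5 - 1) (-(c5 * (2 - c0) + c0)) (c5 * (1 - c0)) =
      √(c0 ^ 2 * (c5 - 1) ^ 2 + 4 * c5) * √(c0 ^ 2 * (c5 - 1) ^ 2 + 4 * c5) := by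
    rw [discrim_odds_quadratic, mul_self_sqrt (by positivity)]
  have hr : f0 = (-(-(c5 * (2 - c0) + c0)) - √(c0 ^ 2 * (c5 - 1) ^ 2 + 4 * c5)) /
      (2 * (c5 - 1)) := by rw [hf0, neg_neg]
  have hmem : ∀ x y, x < y → 0 < c5 * ((1 - x) * (1 - (x + c0))) - x * (x + c0) →
      c5 * ((1 - y) * (1 - (y + c0))) - y * (y + c0) < 0 → f0 ∈ Set.Ioo x y := by
    intro x y hxy hx hy
    rw [← odds_quadratic_eq] at hx hy
    exact root_mem_Ioo_of_sign_change ha (sqrt_nonneg _) hs hr hxy hx hy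
  obtain ⟨hf0l, hf0u⟩ := hmem 0 1 one_pos (by nlinarith) (by nlinarith)
  obtain ⟨hf1l, hf1u⟩ := hmem (-c0) (1 - c0) (by linarith) (by nlinarith) (by nlinarith)
  subst hf1
  refine ⟨hf0l.le, hf0u.le, by linarith, by linarith, fun _ _ _ _ => ?_⟩
  have hq : c5 * ((1 - f0) * (1 - (f0 + c0))) - f0 * (f0 + c0) = 0 := by
    rw [← odds_quadratic_eq, quadratic_eq_mul_sub_root ha hs hr]; ring
  have hden : (1 - f0) * (1 - (f0 + c0)) ≠ 0 := by
    apply mul_ne_zero <;> linarith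
  rw [div_eq_iff hden]
  linarith
end

section
/- Let c0 ∈ (0,∞) and c5 ∈ (0,∞) with c5 ≠ 1. Define f0 = (-(c0+1)c5 + √(c5²(c0-1)² + 4c0c5)) / (2c0(1-c5)) and f1 = c0·f0. If 0 < f0 < 1 and 0 < f1 < 1, then f0·f1 / ((1-f0)(1-f1)) = c5 and f1/f0 = c0. -/
/-!
With `f1 = c0 f0`, the odds-product equation `f0 f1 = c5 (1 - f0) (1 - f1)` is the quadratic
`c0 (1 - c5) f0² + (c0 + 1) c5 f0 - c5 = 0`, whose discriminant is
`c5² (c0 - 1)² + 4 c0 c5 ≥ 0`; the closed form for `f0` is its `+√` root.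
-/

lemma discrim_oddsProduct_quadratic (c0 c5 : ℝ) :
    discrim (c0 * (1 - c5)) ((c0 + 1) * c5) (-c5) = c5 ^ 2 * (c0 - 1) ^ 2 + 4 * c0 * c5 := by
  unfold discrim; ring

lemma oddsProduct_quadratic_eq_zero {c0 c5 : ℝ} (hc0 : c0 ≠ 0) (hc5 : c5 ≠ 1)
    (hD : 0 ≤ c5 ^ 2 * (c0 - 1) ^ 2 + 4 * c0 * c5) :
    let x := (-(c0 + 1) * c5 + √(c5 ^ 2 * (c0 - 1) ^ 2 + 4 * c0 * c5)) / (2 * c0 * (1 - c5))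
    c0 * (1 - c5) * (x * x) + (c0 + 1) * c5 * x + -c5 = 0 := by
  intro x
  have ha : c0 * (1 - c5) ≠ 0 := mul_ne_zero hc0 (sub_ne_zero.mpr hc5.symm)
  have hs : discrim (c0 * (1 - c5)) ((c0 + 1) * c5) (-c5)
      = √(c5 ^ 2 * (c0 - 1) ^ 2 + 4 * c0 * c5) * √(c5 ^ 2 * (c0 - 1) ^ 2 + 4 * c0 * c5) := by
    rw [discrim_oddsProduct_quadratic, Real.mul_self_sqrt hD]
  refine (quadratic_eq_zero_iff ha hs x).mpr (Or.inl ?_)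
  simp only [x, neg_mul, mul_assoc]

lemma oddsProduct_eq_of_quadratic_eq_zero {c0 c5 x : ℝ}
    (h : c0 * (1 - c5) * (x * x) + (c0 + 1) * c5 * x + -c5 = 0) :
    x * (c0 * x) = c5 * ((1 - x) * (1 - c0 * x)) := by
  linear_combination h

theorem stmt_3_general (c0 c5 : ℝ) (hc0 : 0 < c0) (hc5 : 0 < c5) (hne : c5 ≠ 1)
    (f0 f1 : ℝ)
    (hf0 : f0 = (-(c0 + 1) * c5 + Real.sqrt (c5 ^ 2 * (c0 - 1) ^ 2 + 4 * c0 * c5)) /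
      (2 * c0 * (1 - c5)))
    (hf1 : f1 = c0 * f0)
    (h0 : 0 < f0) (h0' : f0 < 1) (h1' : f1 < 1) :
    f0 * f1 / ((1 - f0) * (1 - f1)) = c5 ∧ f1 / f0 = c0 := by
  have hroot := oddsProduct_quadratic_eq_zero hc0.ne' hne (by positivity)
  rw [← hf0] at hroot
  have hodds := oddsProduct_eq_of_quadratic_eq_zero hroot
  rw [← hf1] at hodds
  have hden : (1 - f0) * (1 - f1) ≠ 0 := mul_ne_zero (by linarith) (by linarith)
  refine ⟨(div_eq_iff hden).mpr hodds, ?_⟩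
  rw [hf1, mul_div_assoc, div_self h0.ne', mul_one]

/-- Multiplicative LATE parameterization: with relative risk `c0` and odds product `c5`,
`f0` as in closed form and `f1 = c0 f0` satisfy the odds product and relative risk
identities. -/
theorem stmt_3 (c0 c5 : ℝ) (hc0 : 0 < c0) (hc5 : 0 < c5) (hne : c5 ≠ 1)
    (f0 f1 : ℝ)
    (hf0 : f0 = (-(c0 + 1) * c5 + Real.sqrt (c5 ^ 2 * (c0 - 1) ^ 2 + 4 * c0 * c5)) /
      (2 * c0 * (1 - c5)))
    (hf1 : f1 = c0 * f0)
    (h0 : 0 < f0) (h0' : f0 < 1) (h1 : 0 < f1) (h1' : f1 < 1) :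
    f0 * f1 / ((1 - f0) * (1 - f1)) = c5 ∧ f1 / f0 = c0 :=
  stmt_3_general c0 c5 hc0 hc5 hne f0 f1 hf0 hf1 h0 h0' h1'
end

section
/- Let c1, c2, c3, c4 ∈ [0,1] and let f0, f1 ∈ [0,1]. Define p(0,1|1) = (1-c1)(1-c2)c3, p(0,0|1) = (1-c1)(1-c2)(1-c3), p(1,1|0) = (1-c1)c2c4, p(1,0|0) = (1-c1)c2(1-c4), p(1,1|1) = f1·c1 + p(1,1|0), p(0,1|0) = f0·c1 + p(0,1|1), p(1,0|1) = 1 - p(0,0|1) - p(0,1|1) - p(1,1|1), p(0,0|0) = 1 - p(0,1|0) - p(1,0|0) - p(1,1|0). Then all eight quantities lie in [0,1], the probabilities for each z sum to 1, and the monotonicity inequalities p(1,y|1) ≥ p(1,y|0) and p(0,y|1) ≤ p(0,y|0) hold for y = 0,1. -/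
/-!
The sums equal one by construction, so it suffices to show that all eight cells are nonnegative.
Writing out the two defined cells as `p(1,0|1) = (1 - f1) c1 + p(1,0|0)` and
`p(0,0|0) = (1 - f0) c1 + p(0,0|1)` exhibits every cell as a sum of products of numbers in
`[0, 1]`; nonnegative numbers with sum one lie in `[0, 1]`. The same two identities, together
with the definitions of `p(1,1|1)` and `p(0,1|0)`, give monotonicity: passing from `z = 0` to
`z = 1` only moves the complier mass `c1` from `d = 0` to `d = 1`.
-/

open Set unitInterval

theorem mem_Icc_of_nonneg_of_add_add_add_eq_one {a b c d : ℝ} (ha : 0 ≤ a) (hb : 0 ≤ b)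
    (hc : 0 ≤ c) (hd : 0 ≤ d) (h : a + b + c + d = 1) :
    a ∈ Icc 0 1 ∧ b ∈ Icc 0 1 ∧ c ∈ Icc 0 1 ∧ d ∈ Icc 0 1 :=
  ⟨⟨ha, by linarith⟩, ⟨hb, by linarith⟩, ⟨hc, by linarith⟩, ⟨hd, by linarith⟩⟩

/-- The constructed observed-data probabilities lie in the constrained simplex `Δ`:
all in `[0,1]`, summing to one for each `z`, and satisfying monotonicity. -/
theorem stmt_6 (c1 c2 c3 c4 f0 f1 : ℝ)
    (hc1 : c1 ∈ Set.Icc (0 : ℝ) 1) (hc2 : c2 ∈ Set.Icc (0 : ℝ) 1)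
    (hc3 : c3 ∈ Set.Icc (0 : ℝ) 1) (hc4 : c4 ∈ Set.Icc (0 : ℝ) 1)
    (hf0 : f0 ∈ Set.Icc (0 : ℝ) 1) (hf1 : f1 ∈ Set.Icc (0 : ℝ) 1)
    (p011 p001 p110 p100 p111 p010 p101 p000 : ℝ)
    (h011 : p011 = (1 - c1) * (1 - c2) * c3)
    (h001 : p001 = (1 - c1) * (1 - c2) * (1 - c3))
    (h110 : p110 = (1 - c1) * c2 * c4)
    (h100 : p100 = (1 - c1) * c2 * (1 - c4))
    (h111 : p111 = f1 * c1 + p110)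
    (h010 : p010 = f0 * c1 + p011)
    (h101 : p101 = 1 - p001 - p011 - p111)
    (h000 : p000 = 1 - p010 - p100 - p110) :
    (p011 ∈ Set.Icc (0 : ℝ) 1 ∧ p001 ∈ Set.Icc (0 : ℝ) 1 ∧
     p110 ∈ Set.Icc (0 : ℝ) 1 ∧ p100 ∈ Set.Icc (0 : ℝ) 1 ∧
     p111 ∈ Set.Icc (0 : ℝ) 1 ∧ p010 ∈ Set.Icc (0 : ℝ) 1 ∧
     p101 ∈ Set.Icc (0 : ℝ) 1 ∧ p000 ∈ Set.Icc (0 : ℝ) 1) ∧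
    (p001 + p011 + p101 + p111 = 1 ∧ p000 + p010 + p100 + p110 = 1) ∧
    (p111 ≥ p110 ∧ p101 ≥ p100 ∧ p011 ≤ p010 ∧ p001 ≤ p000) := by
  have sc1 := Icc.mem_iff_one_sub_mem.mp hc1
  have sc2 := Icc.mem_iff_one_sub_mem.mp hc2
  have h011₀ : 0 ≤ p011 := h011 ▸ (mul_mem (mul_mem sc1 sc2) hc3).1
  have h001₀ : 0 ≤ p001 := h001 ▸ (mul_mem (mul_mem sc1 sc2) (Icc.mem_iff_one_sub_mem.mp hc3)).1
  have h110₀ : 0 ≤ p110 := h110 ▸ (mul_mem (mul_mem sc1 hc2) hc4).1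
  have h100₀ : 0 ≤ p100 := h100 ▸ (mul_mem (mul_mem sc1 hc2) (Icc.mem_iff_one_sub_mem.mp hc4)).1
  have hf1c1 : 0 ≤ f1 * c1 := (mul_mem hf1 hc1).1
  have hf0c1 : 0 ≤ f0 * c1 := (mul_mem hf0 hc1).1
  have h101_eq : p101 = (1 - f1) * c1 + p100 := by subst_vars; ring
  have h000_eq : p000 = (1 - f0) * c1 + p001 := by subst_vars; ring
  have hg1c1 : 0 ≤ (1 - f1) * c1 := (mul_mem (Icc.mem_iff_one_sub_mem.mp hf1) hc1).1
  have hg0c1 : 0 ≤ (1 - f0) * c1 := (mul_mem (Icc.mem_iff_one_sub_mem.mp hf0) hc1).1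
  have sum1 : p001 + p011 + p101 + p111 = 1 := by linarith
  have sum0 : p000 + p010 + p100 + p110 = 1 := by linarith
  obtain ⟨i001, i011, i101, i111⟩ :=
    mem_Icc_of_nonneg_of_add_add_add_eq_one h001₀ h011₀ (by linarith) (by linarith) sum1
  obtain ⟨i000, i010, i100, i110⟩ :=
    mem_Icc_of_nonneg_of_add_add_add_eq_one (by linarith) (by linarith) h100₀ h110₀ sum0
  exact ⟨⟨i011, i001, i110, i100, i111, i010, i101, i000⟩, ⟨sum1, sum0⟩,
    by linarith, by linarith, by linarith, by linarith⟩
end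

section
/- Let Z, D, Y be random variables, g(X) a measurable function, and suppose E(H | Z=1, X) = E(H | Z=0, X) = m(X) for some measurable m, where H is a function of (Y,D,X). Let π*(X) ∈ (0,1) be arbitrary (possibly misspecified) and f*(Z|X) = π*(X)^Z(1-π*(X))^{1-Z}. Then E[ g(X)·((2Z-1)/f*(Z|X))·(H - m(X)) ] = 0. -/
open MeasureTheory

/-- Conditional mean of `f` given the event `A`. -/
noncomputable def condMean {Ω : Type*} [MeasurableSpace Ω] (μ : Measure Ω)
    (A : Set Ω) (f : Ω → ℝ) : ℝ :=
  (∫ ω in A, f ω ∂μ) / (μ A).toReal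

/-! On each of the events `{Z = 1}`, `{Z = 0}` the weight `(2Z - 1) / f*(Z)` is a constant, so the
integral splits into two constant multiples of `∫ (H - m)` over these events, and each of those
vanishes because `m` is the conditional mean of `H` on both of them. -/

-- On a null event both terms vanish: the integral, and `condMean`, which is `0 / 0 = 0` there.
theorem setIntegral_sub_condMean_eq_zero {Ω : Type*} [MeasurableSpace Ω] {μ : Measure Ω}
    [IsFiniteMeasure μ] {S : Set Ω} {f : Ω → ℝ} (hf : IntegrableOn f S μ) :
    ∫ ω in S, (f ω - condMean μ S f) ∂μ = 0 := by
  rw [integral_sub hf (integrable_const _), setIntegral_const, smul_eq_mul, condMean]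
  rcases eq_or_ne (μ S) 0 with hS | hS
  · simp [Measure.restrict_eq_zero.2 hS]
  · have : μ.real S ≠ 0 := ENNReal.toReal_ne_zero.2 ⟨hS, measure_ne_top μ S⟩
    rw [Measure.real] at this ⊢
    field_simp
    ring

theorem stmt_11_general {Ω : Type*} [MeasurableSpace Ω] (μ : Measure Ω) [IsProbabilityMeasure μ]
    (Z : Ω → ℝ) (H : Ω → ℝ) (g m πs : ℝ)
    (hZbin : ∀ ω, Z ω = 0 ∨ Z ω = 1)
    (hZ : Measurable Z)
    (hH : Integrable H μ)
    (hm1 : condMean μ {ω | Z ω = 1} H = m)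
    (hm0 : condMean μ {ω | Z ω = 0} H = m) :
    (∫ ω, g * ((2 * Z ω - 1) / (if Z ω = 1 then πs else 1 - πs)) * (H ω - m) ∂μ) = 0 := by
  set A : Set Ω := {ω | Z ω = 1}
  have hA : MeasurableSet A := hZ (measurableSet_singleton 1)
  have hAc : Aᶜ = {ω | Z ω = 0} := by
    ext ω
    rcases hZbin ω with h | h <;> simp [A, h]
  have hHm : Integrable (fun ω => H ω - m) μ := hH.sub (integrable_const m)
  have h1 : ∫ ω in A, (H ω - m) ∂μ = 0 :=
    hm1 ▸ setIntegral_sub_condMean_eq_zero hH.integrableOn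
  have h0 : ∫ ω in Aᶜ, (H ω - m) ∂μ = 0 := by
    rw [hAc]
    exact hm0 ▸ setIntegral_sub_condMean_eq_zero hH.integrableOn
  have hsplit : (fun ω => g * ((2 * Z ω - 1) / (if Z ω = 1 then πs else 1 - πs)) * (H ω - m))
      = A.piecewise (fun ω => g / πs * (H ω - m)) (fun ω => -g / (1 - πs) * (H ω - m)) := by
    funext ω
    rcases hZbin ω with h | h
    · have hω : ω ∉ A := by simp [A, h]
      rw [Set.piecewise_eq_of_notMem _ _ _ hω, h, if_neg zero_ne_one]
      ring
    · have hω : ω ∈ A := h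
      rw [Set.piecewise_eq_of_mem _ _ _ hω, h, if_pos rfl]
      ring
  rw [hsplit, integral_piecewise hA (hHm.const_mul _).integrableOn (hHm.const_mul _).integrableOn,
    integral_const_mul, integral_const_mul, h1, h0]
  ring

/-- Unbiasedness of the estimating function under a correct outcome nuisance
`m = E(H|Z=0) = E(H|Z=1)`, for an arbitrary (possibly misspecified) instrumental
density `π* ∈ (0,1)`. All quantities are conditional on a fixed value of `X`, so
`g(X)` and `m(X)` are constants `g`, `m`. -/
theorem stmt_11 {Ω : Type*} [MeasurableSpace Ω] (μ : Measure Ω) [IsProbabilityMeasure μ]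
    (Z : Ω → ℝ) (H : Ω → ℝ) (g m πs : ℝ)
    (hZbin : ∀ ω, Z ω = 0 ∨ Z ω = 1)
    (hZ : Measurable Z)
    (hH : Integrable H μ)
    (hZ1 : 0 < μ {ω | Z ω = 1}) (hZ0 : 0 < μ {ω | Z ω = 0})
    (hπs : πs ∈ Set.Ioo (0 : ℝ) 1)
    (hm1 : condMean μ {ω | Z ω = 1} H = m)
    (hm0 : condMean μ {ω | Z ω = 0} H = m) :
    (∫ ω, g * ((2 * Z ω - 1) / (if Z ω = 1 then πs else 1 - πs)) * (H ω - m) ∂μ) = 0 :=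
  stmt_11_general μ Z H g m πs hZbin hZ hH hm1 hm0
end

section
/- Let Z be binary with true P(Z=1|X) = π(X) ∈ (0,1), f(Z|X) = π(X)^Z(1-π(X))^{1-Z}, and suppose E(H | Z=1, X) = E(H | Z=0, X). Then for any measurable functions g(X) and m*(X), E[ g(X)·((2Z-1)/f(Z|X))·(H - m*(X)) ] = 0. -/
/-!
On `{Z = 1}` the weight `(2Z - 1)/f(Z)` is `1/π` and on `{Z = 0}` it is `-1/(1 - π)`. Over each of
the two events, `H - m*` integrates to the probability of the event times `c - m*`, where `c` is
the common conditional mean of `H`; the probabilities `π` and `1 - π` cancel the weights, leaving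
`g (c - m*) - g (c - m*) = 0`, whatever `m*` is.
-/

open MeasureTheory

theorem setIntegral_sub_const_eq_measureReal_mul_condMean {Ω : Type*} [MeasurableSpace Ω]
    {μ : Measure Ω} [IsFiniteMeasure μ] {A : Set Ω} {H : Ω → ℝ} (hA : μ.real A ≠ 0)
    (hH : IntegrableOn H A μ) (m : ℝ) :
    ∫ ω in A, (H ω - m) ∂μ = μ.real A * (condMean μ A H - m) := by
  rw [integral_sub hH (integrable_const m), setIntegral_const, smul_eq_mul, condMean,
    ← measureReal_def]
  field_simp

theorem inverse_propensity_weight_of_binary {z π : ℝ} (hz : z = 0 ∨ z = 1) :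
    (2 * z - 1) / (if z = 1 then π else 1 - π) = if z = 1 then π⁻¹ else -(1 - π)⁻¹ := by
  rcases hz with rfl | rfl <;> norm_num [neg_div]

/-- Everything is conditional on a fixed `X`, so `g(X)` and `m*(X)` are the constants `g`, `ms`. -/
theorem stmt_12 {Ω : Type*} [MeasurableSpace Ω] (μ : Measure Ω) [IsProbabilityMeasure μ]
    (Z : Ω → ℝ) (H : Ω → ℝ) (π g ms : ℝ)
    (hZbin : ∀ ω, Z ω = 0 ∨ Z ω = 1)
    (hZ : Measurable Z)
    (hH : Integrable H μ)
    (hπ : π ∈ Set.Ioo (0 : ℝ) 1)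
    (hπeq : (μ {ω | Z ω = 1}).toReal = π)
    (hHeq : condMean μ {ω | Z ω = 1} H = condMean μ {ω | Z ω = 0} H) :
    (∫ ω, g * ((2 * Z ω - 1) / (if Z ω = 1 then π else 1 - π)) * (H ω - ms) ∂μ) = 0 := by
  set A : Set Ω := {ω | Z ω = 1}
  have hA : MeasurableSet A := hZ (measurableSet_singleton 1)
  have hμA : μ.real A = π := hπeq
  have hμAc : μ.real Aᶜ = 1 - π := by rw [probReal_compl_eq_one_sub hA, hμA]
  have hZ0 : {ω | Z ω = 0} = Aᶜ := by
    ext ω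
    rcases hZbin ω with h | h <;> simp [A, h]
  have hsplit : (fun ω => g * ((2 * Z ω - 1) / (if Z ω = 1 then π else 1 - π)) * (H ω - ms))
      = A.piecewise (fun ω => g * π⁻¹ * (H ω - ms)) (fun ω => g * -(1 - π)⁻¹ * (H ω - ms)) := by
    funext ω
    rw [inverse_propensity_weight_of_binary (hZbin ω)]
    by_cases h : Z ω = 1 <;> simp [Set.piecewise, A, h]
  rw [hZ0] at hHeq
  have hHms : Integrable (fun ω => H ω - ms) μ := hH.sub (integrable_const ms)
  have hπne : π ≠ 0 := hπ.1.ne'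
  have h1πne : 1 - π ≠ 0 := sub_ne_zero.2 hπ.2.ne'
  rw [hsplit, integral_piecewise hA (hHms.const_mul _).integrableOn
      (hHms.const_mul _).integrableOn, integral_const_mul, integral_const_mul,
    setIntegral_sub_const_eq_measureReal_mul_condMean (hμA ▸ hπne) hH.integrableOn,
    setIntegral_sub_const_eq_measureReal_mul_condMean (hμAc ▸ h1πne) hH.integrableOn,
    ← hHeq, hμA, hμAc]
  field_simp
  ring
end

section
/- Under assumptions: Y(z,d) = Y(d) a.s. (exclusion), Z ⫫ (Y(d), D(z)) | X (independence), D(1) ≥ D(0) a.s. (monotonicity), and consistency D = D(Z), Y = Y(D), with P(D(1) > D(0) | X) > 0: E(Y|Z=1,X) - E(Y|Z=0,X) = E[Y(1) - Y(0) | D(1) > D(0), X] · P(D(1) > D(0) | X). -/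
/-!
On `{Z = z}` the observed outcome is the potential outcome `Y(D(z))`, a function of
`(Y(0), Y(1), D(0), D(1))` and hence independent of `Z`, so its conditional mean given `Z = z`
is its plain mean. The instrument contrast is therefore `E[Y(D(1)) - Y(D(0))]`, and for binary
monotone `D(0) ≤ D(1)` the integrand is `Y(1) - Y(0)` on the compliers `{D(0) < D(1)}` and `0`
elsewhere.
-/

open MeasureTheory ProbabilityTheory

section

variable {Ω β : Type*} [MeasurableSpace Ω] [MeasurableSpace β] {μ : Measure Ω}

theorem ProbabilityTheory.IndepFun.setIntegral_preimage_eq_measureReal_mul_integral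
    {Z : Ω → β} {W : Ω → ℝ} {s : Set β} (hind : IndepFun Z W μ) (hZ : Measurable Z)
    (hs : MeasurableSet s) (hW : AEStronglyMeasurable W μ) :
    ∫ ω in Z ⁻¹' s, W ω ∂μ = μ.real (Z ⁻¹' s) * ∫ ω, W ω ∂μ := by
  have hindIndicator : IndepFun (fun ω => s.indicator (1 : β → ℝ) (Z ω)) W μ :=
    hind.comp (measurable_one.indicator hs) measurable_id
  have hmeas : AEStronglyMeasurable (fun ω => s.indicator (1 : β → ℝ) (Z ω)) μ :=
    ((measurable_one.indicator hs).comp hZ).aestronglyMeasurable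
  calc ∫ ω in Z ⁻¹' s, W ω ∂μ = ∫ ω, s.indicator 1 (Z ω) * W ω ∂μ := by
        rw [← integral_indicator (hZ hs)]
        congr 1 with ω
        by_cases h : Z ω ∈ s <;> simp [h]
    _ = μ.real (Z ⁻¹' s) * ∫ ω, W ω ∂μ := by
        rw [hindIndicator.integral_fun_mul_eq_mul_integral hmeas hW]
        congr 1
        simp_rw [← Set.indicator_comp_right]
        exact integral_indicator_one (hZ hs)

theorem condMean_congr {A : Set Ω} {f g : Ω → ℝ} (hA : MeasurableSet A) (h : Set.EqOn f g A) :
    condMean μ A f = condMean μ A g := by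
  rw [condMean, condMean, setIntegral_congr_fun hA h]

theorem condMean_mul_toReal_measure [IsFiniteMeasure μ] {A : Set Ω} (f : Ω → ℝ) (hA : μ A ≠ 0) :
    condMean μ A f * (μ A).toReal = ∫ ω in A, f ω ∂μ :=
  div_mul_cancel₀ _ (ENNReal.toReal_ne_zero.2 ⟨hA, measure_ne_top μ A⟩)

theorem ProbabilityTheory.IndepFun.condMean_preimage_eq_integral [IsFiniteMeasure μ]
    {Z : Ω → β} {W : Ω → ℝ} {s : Set β} (hind : IndepFun Z W μ) (hZ : Measurable Z)
    (hs : MeasurableSet s) (hW : AEStronglyMeasurable W μ) (hpos : μ (Z ⁻¹' s) ≠ 0) :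
    condMean μ (Z ⁻¹' s) W = ∫ ω, W ω ∂μ := by
  rw [condMean, hind.setIntegral_preimage_eq_measureReal_mul_integral hZ hs hW,
    measureReal_def, mul_div_cancel_left₀ _ (ENNReal.toReal_ne_zero.2 ⟨hpos, measure_ne_top μ _⟩)]

theorem ite_eq_one_sub_ite_eq_one {G : Type*} [AddGroup G] {d₀ d₁ : ℝ}
    (h₀ : d₀ = 0 ∨ d₀ = 1) (h₁ : d₁ = 0 ∨ d₁ = 1) (h : d₀ ≤ d₁) (a b : G) :
    ((if d₁ = 1 then b else a) - if d₀ = 1 then b else a) = if d₀ < d₁ then b - a else 0 := by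
  rcases h₀ with rfl | rfl <;> rcases h₁ with rfl | rfl <;> norm_num at *

theorem MeasureTheory.Integrable.ite_eq_one {D f g : Ω → ℝ} (hf : Integrable f μ)
    (hD : Measurable D) (hg : Integrable g μ) :
    Integrable (fun ω => if D ω = 1 then f ω else g ω) μ :=
  Integrable.piecewise (s := {ω | D ω = 1}) (hD (measurableSet_singleton 1)) hf.integrableOn
    hg.integrableOn

theorem condMean_outcome_eq_integral_ite [MeasurableSingletonClass β] [IsFiniteMeasure μ]
    {Z : Ω → β} {z : β} {D Y Dz Y0 Y1 : Ω → ℝ} (hZ : Measurable Z) (hDz : Measurable Dz)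
    (hY0int : Integrable Y0 μ) (hY1int : Integrable Y1 μ)
    (hindep : IndepFun Z (fun ω => (Y0 ω, Y1 ω, Dz ω)) μ)
    (hD : ∀ ω, Z ω = z → D ω = Dz ω) (hY : ∀ ω, Y ω = if D ω = 1 then Y1 ω else Y0 ω)
    (hpos : μ {ω | Z ω = z} ≠ 0) :
    condMean μ {ω | Z ω = z} Y = ∫ ω, (if Dz ω = 1 then Y1 ω else Y0 ω) ∂μ := by
  have hind : IndepFun Z (fun ω => if Dz ω = 1 then Y1 ω else Y0 ω) μ :=
    hindep.comp (ψ := fun p : ℝ × ℝ × ℝ => if p.2.2 = 1 then p.2.1 else p.1) measurable_id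
      (Measurable.ite (measurableSet_eq_fun measurable_snd.snd measurable_const)
        measurable_snd.fst measurable_fst)
  rw [condMean_congr (A := {ω | Z ω = z}) (hZ (measurableSet_singleton z)) fun ω hω => by
    rw [hY, hD ω hω]]
  exact hind.condMean_preimage_eq_integral hZ (measurableSet_singleton z)
    (hY1int.ite_eq_one hDz hY0int).aestronglyMeasurable hpos

end

theorem stmt_13_general {Ω : Type*} [MeasurableSpace Ω] (μ : Measure Ω) [IsProbabilityMeasure μ]
    (Z D Y D0 D1 Y0 Y1 : Ω → ℝ)
    (hD0bin : ∀ ω, D0 ω = 0 ∨ D0 ω = 1) (hD1bin : ∀ ω, D1 ω = 0 ∨ D1 ω = 1)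
    (hZ : Measurable Z) (hD0 : Measurable D0) (hD1 : Measurable D1)
    (hY0int : Integrable Y0 μ) (hY1int : Integrable Y1 μ)
    -- independence: Z ⫫ (Y(0), Y(1), D(0), D(1)) (given X)
    (hindep : IndepFun Z (fun ω => (Y0 ω, Y1 ω, D0 ω, D1 ω)) μ)
    -- monotonicity: D(1) ≥ D(0) a.s. (here everywhere)
    (hmono : ∀ ω, D0 ω ≤ D1 ω)
    -- consistency: D = D(Z), Y = Y(D)
    (hD : ∀ ω, D ω = if Z ω = 1 then D1 ω else D0 ω)
    (hY : ∀ ω, Y ω = if D ω = 1 then Y1 ω else Y0 ω)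
    -- positivity
    (hZ1 : 0 < μ {ω | Z ω = 1}) (hZ0 : 0 < μ {ω | Z ω = 0})
    (hCO : 0 < μ {ω | D0 ω < D1 ω}) :
    condMean μ {ω | Z ω = 1} Y - condMean μ {ω | Z ω = 0} Y =
      condMean μ {ω | D0 ω < D1 ω} (fun ω => Y1 ω - Y0 ω) *
        (μ {ω | D0 ω < D1 ω}).toReal := by
  have hmeanZ1 : condMean μ {ω | Z ω = 1} Y = ∫ ω, (if D1 ω = 1 then Y1 ω else Y0 ω) ∂μ :=
    condMean_outcome_eq_integral_ite hZ hD1 hY0int hY1int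
      (hindep.comp (ψ := fun p : ℝ × ℝ × ℝ × ℝ => (p.1, p.2.1, p.2.2.2)) measurable_id
        (by fun_prop))
      (fun ω hω => by rw [hD, if_pos hω]) hY hZ1.ne'
  have hmeanZ0 : condMean μ {ω | Z ω = 0} Y = ∫ ω, (if D0 ω = 1 then Y1 ω else Y0 ω) ∂μ :=
    condMean_outcome_eq_integral_ite hZ hD0 hY0int hY1int
      (hindep.comp (ψ := fun p : ℝ × ℝ × ℝ × ℝ => (p.1, p.2.1, p.2.2.1)) measurable_id
        (by fun_prop))
      (fun ω hω => by simp [hD, hω]) hY hZ0.ne'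
  rw [hmeanZ1, hmeanZ0,
    ← integral_sub (hY1int.ite_eq_one hD1 hY0int) (hY1int.ite_eq_one hD0 hY0int),
    condMean_mul_toReal_measure _ hCO.ne', ← integral_indicator (measurableSet_lt hD0 hD1)]
  congr 1 with ω
  exact ite_eq_one_sub_ite_eq_one (hD0bin ω) (hD1bin ω) (hmono ω) (Y0 ω) (Y1 ω)

/-- Key decomposition behind the Wald formula: under exclusion (encoded by the
potential outcomes `Y0, Y1` depending only on treatment), independence of `Z` from the
potential outcomes, monotonicity, consistency, and positivity, the instrument contrast
of the observed outcome equals the complier average effect times the complier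
probability. All quantities are conditional on a fixed value of `X`. -/
theorem stmt_13 {Ω : Type*} [MeasurableSpace Ω] (μ : Measure Ω) [IsProbabilityMeasure μ]
    (Z D Y D0 D1 Y0 Y1 : Ω → ℝ)
    (hZbin : ∀ ω, Z ω = 0 ∨ Z ω = 1)
    (hD0bin : ∀ ω, D0 ω = 0 ∨ D0 ω = 1) (hD1bin : ∀ ω, D1 ω = 0 ∨ D1 ω = 1)
    (hZ : Measurable Z) (hD0 : Measurable D0) (hD1 : Measurable D1)
    (hY0 : Measurable Y0) (hY1 : Measurable Y1)
    (hY0int : Integrable Y0 μ) (hY1int : Integrable Y1 μ)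
    -- independence: Z ⫫ (Y(0), Y(1), D(0), D(1)) (given X)
    (hindep : IndepFun Z (fun ω => (Y0 ω, Y1 ω, D0 ω, D1 ω)) μ)
    -- monotonicity: D(1) ≥ D(0) a.s. (here everywhere)
    (hmono : ∀ ω, D0 ω ≤ D1 ω)
    -- consistency: D = D(Z), Y = Y(D)
    (hD : ∀ ω, D ω = if Z ω = 1 then D1 ω else D0 ω)
    (hY : ∀ ω, Y ω = if D ω = 1 then Y1 ω else Y0 ω)
    -- positivity
    (hZ1 : 0 < μ {ω | Z ω = 1}) (hZ0 : 0 < μ {ω | Z ω = 0})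
    (hCO : 0 < μ {ω | D0 ω < D1 ω}) :
    condMean μ {ω | Z ω = 1} Y - condMean μ {ω | Z ω = 0} Y =
      condMean μ {ω | D0 ω < D1 ω} (fun ω => Y1 ω - Y0 ω) *
        (μ {ω | D0 ω < D1 ω}).toReal :=
  stmt_13_general μ Z D Y D0 D1 Y0 Y1 hD0bin hD1bin hZ hD0 hD1 hY0int hY1int hindep hmono hD hY hZ1
    hZ0 hCO
end

section
/- Under the binary IV model with monotonicity (exclusion, independence given X, consistency, D(1) ≥ D(0) a.s., and suitable nondegeneracy): E[Y(1) | D(1)>D(0), X] · P(D(1)>D(0)|X) = E(YD | Z=1, X) - E(YD | Z=0, X), and E[Y(0) | D(1)>D(0), X] · P(D(1)>D(0)|X) = E(Y(1-D) | Z=0, X) - E(Y(1-D) | Z=1, X). -/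
open MeasureTheory ProbabilityTheory

/-!
On the arm `Z = 1` the observed `Y D` and `Y (1 - D)` are `Y(1) D(1)` and `Y(0) (1 - D(1))`, on the
arm `Z = 0` they are `Y(1) D(0)` and `Y(0) (1 - D(0))`. Since `Z` is independent of the potential
variables, conditioning on an arm does not change their means, so the right-hand sides are
`E[Y(1) (D(1) - D(0))]` and `E[Y(0) (D(1) - D(0))]`. Under monotonicity `D(1) - D(0)` is the
indicator of the compliers `D(0) < D(1)`.
-/

section Binary

variable {R : Type*} [Ring R] {d : R}

lemma ite_eq_one_mul_self [DecidableEq R] (hd : d = 0 ∨ d = 1) (a b : R) :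
    (if d = 1 then a else b) * d = a * d := by
  rcases hd with rfl | rfl <;> simp

lemma ite_eq_one_mul_one_sub_self [DecidableEq R] (a b : R) :
    (if d = 1 then a else b) * (1 - d) = b * (1 - d) := by
  split_ifs with h
  · simp [h]
  · rfl

lemma one_sub_eq_zero_or_one (hd : d = 0 ∨ d = 1) : 1 - d = 0 ∨ 1 - d = 1 := by
  rcases hd with rfl | rfl <;> simp

end Binary

section Integrals

variable {Ω : Type*} [MeasurableSpace Ω] {μ : Measure Ω}

lemma condMean_mul_toReal [IsFiniteMeasure μ] (A : Set Ω) (f : Ω → ℝ) :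
    condMean μ A f * (μ A).toReal = ∫ ω in A, f ω ∂μ := by
  by_cases hA : μ A = 0
  · simp [hA, Measure.restrict_eq_zero.mpr hA]
  · exact div_mul_cancel₀ _ (ENNReal.toReal_ne_zero.mpr ⟨hA, measure_ne_top μ A⟩)

lemma ProbabilityTheory.IndepFun.condMean_eq_integral {β γ : Type*} [MeasurableSpace β]
    [MeasurableSingletonClass β] [MeasurableSpace γ] [IsFiniteMeasure μ]
    {Z : Ω → β} {T : Ω → γ} {ψ : γ → ℝ} {f : Ω → ℝ} {z : β}
    (hind : IndepFun Z T μ) (hZ : Measurable Z) (hT : Measurable T) (hψ : Measurable ψ)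
    (hz : μ {ω | Z ω = z} ≠ 0) (hf : ∀ ω, Z ω = z → f ω = ψ (T ω)) :
    condMean μ {ω | Z ω = z} f = ∫ ω, ψ (T ω) ∂μ := by
  have hZz : MeasurableSet {ω | Z ω = z} := hZ (measurableSet_singleton z)
  have hsplit : ∫ ω in {ω | Z ω = z}, ψ (T ω) ∂μ = μ.real {ω | Z ω = z} * ∫ ω, ψ (T ω) ∂μ :=
    ((IndepFun_iff_Indep Z T μ).mp hind).setIntegral_eq_mul hZ.comap_le hT.aemeasurable
      ⟨{z}, measurableSet_singleton z, rfl⟩ hψ.aestronglyMeasurable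
  rw [condMean, setIntegral_congr_fun hZz hf, hsplit, measureReal_def,
    mul_div_cancel_left₀ _ (ENNReal.toReal_ne_zero.mpr ⟨hz, measure_ne_top μ _⟩)]

lemma integral_mul_sub_integral_mul_eq_setIntegral_lt {f a b : Ω → ℝ} (hf : Integrable f μ)
    (ha : Measurable a) (hb : Measurable b) (ha01 : ∀ ω, a ω = 0 ∨ a ω = 1)
    (hb01 : ∀ ω, b ω = 0 ∨ b ω = 1) (hab : ∀ ω, a ω ≤ b ω) :
    ∫ ω, f ω * b ω ∂μ - ∫ ω, f ω * a ω ∂μ = ∫ ω in {ω | a ω < b ω}, f ω ∂μ := by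
  have hint {d : Ω → ℝ} (hd : Measurable d) (hd01 : ∀ ω, d ω = 0 ∨ d ω = 1) :
      Integrable (fun ω => f ω * d ω) μ :=
    hf.mul_bdd (c := 1) hd.aestronglyMeasurable
      (ae_of_all _ fun ω => by rcases hd01 ω with h | h <;> simp [h])
  rw [← integral_sub (hint hb hb01) (hint ha ha01), ← integral_indicator (measurableSet_lt ha hb)]
  congr 1 with ω
  rcases ha01 ω with h | h <;> rcases hb01 ω with h' | h' <;> simp [Set.indicator, h, h']
  linarith [hab ω]

end Integrals

theorem stmt_15_general {Ω : Type*} [MeasurableSpace Ω] (μ : Measure Ω) [IsProbabilityMeasure μ]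
    (Z D Y D0 D1 Y0 Y1 : Ω → ℝ)
    (hD0bin : ∀ ω, D0 ω = 0 ∨ D0 ω = 1) (hD1bin : ∀ ω, D1 ω = 0 ∨ D1 ω = 1)
    (hZ : Measurable Z) (hD0 : Measurable D0) (hD1 : Measurable D1)
    (hY0 : Measurable Y0) (hY1 : Measurable Y1)
    (hY0bdd : ∃ C, ∀ ω, |Y0 ω| ≤ C) (hY1bdd : ∃ C, ∀ ω, |Y1 ω| ≤ C)
    (hindep : IndepFun Z (fun ω => (Y0 ω, Y1 ω, D0 ω, D1 ω)) μ)
    (hmono : ∀ ω, D0 ω ≤ D1 ω)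
    (hD : ∀ ω, D ω = if Z ω = 1 then D1 ω else D0 ω)
    (hY : ∀ ω, Y ω = if D ω = 1 then Y1 ω else Y0 ω)
    (hZ1 : 0 < μ {ω | Z ω = 1}) (hZ0 : 0 < μ {ω | Z ω = 0}) :
    condMean μ {ω | D0 ω < D1 ω} Y1 * (μ {ω | D0 ω < D1 ω}).toReal =
      condMean μ {ω | Z ω = 1} (fun ω => Y ω * D ω) -
        condMean μ {ω | Z ω = 0} (fun ω => Y ω * D ω) ∧
    condMean μ {ω | D0 ω < D1 ω} Y0 * (μ {ω | D0 ω < D1 ω}).toReal =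
      condMean μ {ω | Z ω = 0} (fun ω => Y ω * (1 - D ω)) -
        condMean μ {ω | Z ω = 1} (fun ω => Y ω * (1 - D ω)) := by
  obtain ⟨C0, hC0⟩ := hY0bdd
  obtain ⟨C1, hC1⟩ := hY1bdd
  have hY0i : Integrable Y0 μ := .of_bound hY0.aestronglyMeasurable C0 (ae_of_all _ hC0)
  have hY1i : Integrable Y1 μ := .of_bound hY1.aestronglyMeasurable C1 (ae_of_all _ hC1)
  have hT : Measurable fun ω => (Y0 ω, Y1 ω, D0 ω, D1 ω) := by fun_prop
  have hD_of_one (ω) (hω : Z ω = 1) : D ω = D1 ω := by rw [hD, if_pos hω]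
  have hD_of_zero (ω) (hω : Z ω = 0) : D ω = D0 ω := by rw [hD, if_neg (by simp [hω])]
  have treated_one : condMean μ {ω | Z ω = 1} (fun ω => Y ω * D ω) = ∫ ω, Y1 ω * D1 ω ∂μ :=
    hindep.condMean_eq_integral hZ hT (ψ := fun p => p.2.1 * p.2.2.2) (by fun_prop) hZ1.ne'
      fun ω hω => by rw [hY, hD_of_one ω hω, ite_eq_one_mul_self (hD1bin ω)]
  have treated_zero : condMean μ {ω | Z ω = 0} (fun ω => Y ω * D ω) = ∫ ω, Y1 ω * D0 ω ∂μ :=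
    hindep.condMean_eq_integral hZ hT (ψ := fun p => p.2.1 * p.2.2.1) (by fun_prop) hZ0.ne'
      fun ω hω => by rw [hY, hD_of_zero ω hω, ite_eq_one_mul_self (hD0bin ω)]
  have untreated_one :
      condMean μ {ω | Z ω = 1} (fun ω => Y ω * (1 - D ω)) = ∫ ω, Y0 ω * (1 - D1 ω) ∂μ :=
    hindep.condMean_eq_integral hZ hT (ψ := fun p => p.1 * (1 - p.2.2.2)) (by fun_prop) hZ1.ne'
      fun ω hω => by rw [hY, hD_of_one ω hω, ite_eq_one_mul_one_sub_self]
  have untreated_zero :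
      condMean μ {ω | Z ω = 0} (fun ω => Y ω * (1 - D ω)) = ∫ ω, Y0 ω * (1 - D0 ω) ∂μ :=
    hindep.condMean_eq_integral hZ hT (ψ := fun p => p.1 * (1 - p.2.2.1)) (by fun_prop) hZ0.ne'
      fun ω hω => by rw [hY, hD_of_zero ω hω, ite_eq_one_mul_one_sub_self]
  refine ⟨?_, ?_⟩
  · rw [condMean_mul_toReal, treated_one, treated_zero, integral_mul_sub_integral_mul_eq_setIntegral_lt hY1i
      hD0 hD1 hD0bin hD1bin hmono]
  · rw [condMean_mul_toReal, untreated_zero, untreated_one, integral_mul_sub_integral_mul_eq_setIntegral_lt hY0i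
      (hD1.const_sub 1) (hD0.const_sub 1) (fun ω => one_sub_eq_zero_or_one (hD1bin ω))
      (fun ω => one_sub_eq_zero_or_one (hD0bin ω)) (fun ω => sub_le_sub_left (hmono ω) 1)]
    simp only [sub_lt_sub_iff_left]

/-- Identification of the numerator and denominator of the multiplicative local
average treatment effect: `E[Y(1)|CO] P(CO) = E(YD|Z=1) - E(YD|Z=0)` and
`E[Y(0)|CO] P(CO) = E(Y(1-D)|Z=0) - E(Y(1-D)|Z=1)`, conditional on a fixed `X`. -/
theorem stmt_15 {Ω : Type*} [MeasurableSpace Ω] (μ : Measure Ω) [IsProbabilityMeasure μ]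
    (Z D Y D0 D1 Y0 Y1 : Ω → ℝ)
    (hZbin : ∀ ω, Z ω = 0 ∨ Z ω = 1)
    (hD0bin : ∀ ω, D0 ω = 0 ∨ D0 ω = 1) (hD1bin : ∀ ω, D1 ω = 0 ∨ D1 ω = 1)
    (hZ : Measurable Z) (hD0 : Measurable D0) (hD1 : Measurable D1)
    (hY0 : Measurable Y0) (hY1 : Measurable Y1)
    (hY0bdd : ∃ C, ∀ ω, |Y0 ω| ≤ C) (hY1bdd : ∃ C, ∀ ω, |Y1 ω| ≤ C)
    (hindep : IndepFun Z (fun ω => (Y0 ω, Y1 ω, D0 ω, D1 ω)) μ)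
    (hmono : ∀ ω, D0 ω ≤ D1 ω)
    (hD : ∀ ω, D ω = if Z ω = 1 then D1 ω else D0 ω)
    (hY : ∀ ω, Y ω = if D ω = 1 then Y1 ω else Y0 ω)
    (hZ1 : 0 < μ {ω | Z ω = 1}) (hZ0 : 0 < μ {ω | Z ω = 0})
    (hCO : 0 < μ {ω | D0 ω < D1 ω}) :
    condMean μ {ω | D0 ω < D1 ω} Y1 * (μ {ω | D0 ω < D1 ω}).toReal =
      condMean μ {ω | Z ω = 1} (fun ω => Y ω * D ω) -
        condMean μ {ω | Z ω = 0} (fun ω => Y ω * D ω) ∧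
    condMean μ {ω | D0 ω < D1 ω} Y0 * (μ {ω | D0 ω < D1 ω}).toReal =
      condMean μ {ω | Z ω = 0} (fun ω => Y ω * (1 - D ω)) -
        condMean μ {ω | Z ω = 1} (fun ω => Y ω * (1 - D ω)) :=
  stmt_15_general μ Z D Y D0 D1 Y0 Y1 hD0bin hD1bin hZ hD0 hD1 hY0 hY1 hY0bdd hY1bdd hindep hmono hD
    hY hZ1 hZ0
end

section
/- Under the binary IV model with independence Z ⫫ (Y(d), D(z)) | X, consistency, exclusion, and monotonicity D(1) ≥ D(0): P(D(1) > D(0) | X) = P(D=1 | Z=1, X) - P(D=1 | Z=0, X), and P(D(1)=D(0)=1 | X) = P(D=1 | Z=0, X), and P(D(1)=D(0)=0 | X) = P(D=0 | Z=1, X). -/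
/-!
Independence of the instrument makes conditioning on `Z = z` leave the law of the potential
treatments unchanged, and consistency identifies the observed `D` with `D z` on `{Z = z}`; so the
observed treatment rates are `P(D1 = 1)` and `P(D0 = 1)`. Monotonicity then makes the strata
nested: always-takers are `{D0 = 1}`, never-takers are `{D1 = 0}`, and compliers are
`{D1 = 1} \ {D0 = 1}`.
-/

open MeasureTheory ProbabilityTheory

/-- Conditional probability of `A` given `B`. -/
noncomputable def condProb {Ω : Type*} [MeasurableSpace Ω] (μ : Measure Ω)
    (A B : Set Ω) : ℝ :=
  (μ (A ∩ B)).toReal / (μ B).toReal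

section Identification

variable {Ω : Type*} [MeasurableSpace Ω] {μ : Measure Ω}

theorem condProb_eq_of_indepFun {α β : Type*} [MeasurableSpace α] [MeasurableSpace β]
    [IsFiniteMeasure μ] {Z : Ω → α} {V : Ω → β} (hindep : IndepFun Z V μ) {s : Set α}
    {t : Set β} (hs : MeasurableSet s) (ht : MeasurableSet t) (hZs : μ (Z ⁻¹' s) ≠ 0)
    {A : Set Ω} (hA : A ∩ Z ⁻¹' s = Z ⁻¹' s ∩ V ⁻¹' t) :
    condProb μ A (Z ⁻¹' s) = (μ (V ⁻¹' t)).toReal := by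
  rw [condProb, hA, hindep.measure_inter_preimage_eq_mul _ _ hs ht, ENNReal.toReal_mul,
    mul_div_cancel_left₀ _ (ENNReal.toReal_ne_zero.mpr ⟨hZs, measure_ne_top μ _⟩)]

variable {Z D D0 D1 : Ω → ℝ}

theorem condProb_eq_measure_of_instrument_eq_one [IsFiniteMeasure μ]
    (hindep : IndepFun Z (fun ω => (D0 ω, D1 ω)) μ)
    (hD : ∀ ω, D ω = if Z ω = 1 then D1 ω else D0 ω) (hZ1 : μ {ω | Z ω = 1} ≠ 0) (d : ℝ) :
    condProb μ {ω | D ω = d} {ω | Z ω = 1} = (μ {ω | D1 ω = d}).toReal :=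
  condProb_eq_of_indepFun hindep (measurableSet_singleton 1)
    ((measurableSet_singleton d).preimage measurable_snd) hZ1
    (by ext ω; by_cases hz : Z ω = 1 <;> simp [hD ω, hz, and_comm])

theorem condProb_eq_measure_of_instrument_eq_zero [IsFiniteMeasure μ]
    (hindep : IndepFun Z (fun ω => (D0 ω, D1 ω)) μ)
    (hD : ∀ ω, D ω = if Z ω = 1 then D1 ω else D0 ω) (hZ0 : μ {ω | Z ω = 0} ≠ 0) (d : ℝ) :
    condProb μ {ω | D ω = d} {ω | Z ω = 0} = (μ {ω | D0 ω = d}).toReal :=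
  condProb_eq_of_indepFun hindep (measurableSet_singleton 0)
    ((measurableSet_singleton d).preimage measurable_fst) hZ0
    (by ext ω; by_cases hz : Z ω = 0 <;> simp [hD ω, hz, and_comm])

end Identification

section Monotonicity

variable {Ω : Type*} {D0 D1 : Ω → ℝ}

theorem setOf_eq_one_subset (hD1bin : ∀ ω, D1 ω = 0 ∨ D1 ω = 1) (hmono : ∀ ω, D0 ω ≤ D1 ω) :
    {ω | D0 ω = 1} ⊆ {ω | D1 ω = 1} := by
  intro ω h0
  rcases hD1bin ω with h1 | h1
  · linarith [hmono ω, show D0 ω = 1 from h0]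
  · exact h1

theorem setOf_eq_one_and_eq_one (hD1bin : ∀ ω, D1 ω = 0 ∨ D1 ω = 1)
    (hmono : ∀ ω, D0 ω ≤ D1 ω) : {ω | D1 ω = 1 ∧ D0 ω = 1} = {ω | D0 ω = 1} :=
  Set.ext fun _ => and_iff_right_of_imp fun h0 => setOf_eq_one_subset hD1bin hmono h0

theorem setOf_eq_zero_and_eq_zero (hD0bin : ∀ ω, D0 ω = 0 ∨ D0 ω = 1)
    (hmono : ∀ ω, D0 ω ≤ D1 ω) : {ω | D1 ω = 0 ∧ D0 ω = 0} = {ω | D1 ω = 0} := by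
  ext ω
  refine and_iff_left_of_imp fun h1 => ?_
  rcases hD0bin ω with h0 | h0
  · exact h0
  · linarith [hmono ω, show D1 ω = 0 from h1]

theorem setOf_lt_eq_diff (hD0bin : ∀ ω, D0 ω = 0 ∨ D0 ω = 1)
    (hD1bin : ∀ ω, D1 ω = 0 ∨ D1 ω = 1) :
    {ω | D0 ω < D1 ω} = {ω | D1 ω = 1} \ {ω | D0 ω = 1} := by
  ext ω
  rcases hD0bin ω with h0 | h0 <;> rcases hD1bin ω with h1 | h1 <;> simp [h0, h1]

theorem measure_setOf_lt_toReal_eq_sub [MeasurableSpace Ω] {μ : Measure Ω} [IsFiniteMeasure μ]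
    (hD0 : Measurable D0) (hD0bin : ∀ ω, D0 ω = 0 ∨ D0 ω = 1) (hD1bin : ∀ ω, D1 ω = 0 ∨ D1 ω = 1)
    (hmono : ∀ ω, D0 ω ≤ D1 ω) :
    (μ {ω | D0 ω < D1 ω}).toReal = (μ {ω | D1 ω = 1}).toReal - (μ {ω | D0 ω = 1}).toReal := by
  have hsub := setOf_eq_one_subset hD1bin hmono
  rw [setOf_lt_eq_diff hD0bin hD1bin,
    measure_sdiff hsub (hD0 (measurableSet_singleton 1)).nullMeasurableSet (measure_ne_top μ _),
    ENNReal.toReal_sub_of_le (measure_mono hsub) (measure_ne_top μ _)]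

end Monotonicity

/-- `μ` plays the role of the law conditional on a fixed value of the covariates `X`. -/
theorem stmt_16_general {Ω : Type*} [MeasurableSpace Ω] (μ : Measure Ω) [IsProbabilityMeasure μ]
    (Z D D0 D1 : Ω → ℝ)
    (hD0bin : ∀ ω, D0 ω = 0 ∨ D0 ω = 1) (hD1bin : ∀ ω, D1 ω = 0 ∨ D1 ω = 1)
    (hD0 : Measurable D0)
    (hindep : IndepFun Z (fun ω => (D0 ω, D1 ω)) μ)
    (hmono : ∀ ω, D0 ω ≤ D1 ω)
    (hD : ∀ ω, D ω = if Z ω = 1 then D1 ω else D0 ω)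
    (hZ1 : 0 < μ {ω | Z ω = 1}) (hZ0 : 0 < μ {ω | Z ω = 0}) :
    (μ {ω | D0 ω < D1 ω}).toReal =
      condProb μ {ω | D ω = 1} {ω | Z ω = 1} - condProb μ {ω | D ω = 1} {ω | Z ω = 0} ∧
    (μ {ω | D1 ω = 1 ∧ D0 ω = 1}).toReal = condProb μ {ω | D ω = 1} {ω | Z ω = 0} ∧
    (μ {ω | D1 ω = 0 ∧ D0 ω = 0}).toReal = condProb μ {ω | D ω = 0} {ω | Z ω = 1} := by
  simp only [condProb_eq_measure_of_instrument_eq_one hindep hD hZ1.ne',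
    condProb_eq_measure_of_instrument_eq_zero hindep hD hZ0.ne']
  exact ⟨measure_setOf_lt_toReal_eq_sub hD0 hD0bin hD1bin hmono,
    by rw [setOf_eq_one_and_eq_one hD1bin hmono],
    by rw [setOf_eq_zero_and_eq_zero hD0bin hmono]⟩

/-- Identification of the principal strata proportions (compliers, always-takers,
never-takers) from the observed conditional treatment probabilities, conditional on a
fixed value of `X`. -/
theorem stmt_16 {Ω : Type*} [MeasurableSpace Ω] (μ : Measure Ω) [IsProbabilityMeasure μ]
    (Z D D0 D1 : Ω → ℝ)
    (hZbin : ∀ ω, Z ω = 0 ∨ Z ω = 1)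
    (hD0bin : ∀ ω, D0 ω = 0 ∨ D0 ω = 1) (hD1bin : ∀ ω, D1 ω = 0 ∨ D1 ω = 1)
    (hZ : Measurable Z) (hD0 : Measurable D0) (hD1 : Measurable D1)
    (hindep : IndepFun Z (fun ω => (D0 ω, D1 ω)) μ)
    (hmono : ∀ ω, D0 ω ≤ D1 ω)
    (hD : ∀ ω, D ω = if Z ω = 1 then D1 ω else D0 ω)
    (hZ1 : 0 < μ {ω | Z ω = 1}) (hZ0 : 0 < μ {ω | Z ω = 0}) :
    (μ {ω | D0 ω < D1 ω}).toReal =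
      condProb μ {ω | D ω = 1} {ω | Z ω = 1} - condProb μ {ω | D ω = 1} {ω | Z ω = 0} ∧
    (μ {ω | D1 ω = 1 ∧ D0 ω = 1}).toReal = condProb μ {ω | D ω = 1} {ω | Z ω = 0} ∧
    (μ {ω | D1 ω = 0 ∧ D0 ω = 0}).toReal = condProb μ {ω | D ω = 0} {ω | Z ω = 1} :=
  stmt_16_general μ Z D D0 D1 hD0bin hD1bin hD0 hindep hmono hD hZ1 hZ0
end
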